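/- arXiv:1906.00140 — 4 statements merged into one kernel-verified Lean document; each statement's English description precedes it below -/
import Mathlib

section
/- When a new vertex v together with a set of incident edges E(v) is inserted into a graph G (where v is not a vertex of G), every old edge e of G whose new trussness is unchanged or changed satisfies |τ_new(e) − τ_old(e)| ≤ 1, where τ_old is trussness in G and τ_new is trussness in G ∪ ({v}, E(v)). -/
/-!
Adding edges never destroys a truss, so trussness can only grow. Conversely, deleting the new
vertex `v` from a `k`-truss of the enlarged graph leaves a subgraph of the old graph in which
every edge has lost at most the one triangle through `v`, i.e. a `(k - 1)`-truss.
-/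

open SimpleGraph

/-- Support of an edge (u,v) in a subgraph K: number of common neighbors of u and v in K. -/
noncomputable def esupp {V : Type*} {G : SimpleGraph V} (K : G.Subgraph) (u v : V) : ℕ :=
  {w | K.Adj u w ∧ K.Adj v w}.ncard

/-- K is a k-truss: every edge of K is contained in at least k-2 triangles within K. -/
def IsKTruss {V : Type*} {G : SimpleGraph V} (K : G.Subgraph) (k : ℕ) : Prop :=
  ∀ u v, K.Adj u v → k - 2 ≤ esupp K u v

/-- Trussness of edge (u,v) in G: the largest k such that some k-truss of G contains (u,v). -/
noncomputable def tr {V : Type*} (G : SimpleGraph V) (u v : V) : ℕ :=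
  sSup {k | ∃ K : G.Subgraph, K.Adj u v ∧ IsKTruss K k}

/-- Support of an edge (u,v) in a graph G. -/
noncomputable def gsupp {V : Type*} (G : SimpleGraph V) (u v : V) : ℕ :=
  {w | G.Adj u w ∧ G.Adj v w}.ncard

namespace SimpleGraph.Subgraph

variable {V : Type*} {G H : SimpleGraph V}

def transfer (K : H.Subgraph) (h : ∀ ⦃a b⦄, K.Adj a b → G.Adj a b) : G.Subgraph where
  verts := K.verts
  Adj := K.Adj
  adj_sub hab := h hab
  edge_vert := K.edge_vert
  symm := K.symm

lemma deleteVerts_singleton_adj {K : G.Subgraph} {v a b : V} :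
    (K.deleteVerts {v}).Adj a b ↔ K.Adj a b ∧ a ≠ v ∧ b ≠ v :=
  ⟨fun ⟨⟨_, ha⟩, ⟨_, hb⟩, hab⟩ => ⟨hab, ha, hb⟩,
    fun ⟨hab, ha, hb⟩ => ⟨⟨K.edge_vert hab, ha⟩, ⟨K.edge_vert hab.symm, hb⟩, hab⟩⟩

lemma esupp_le_esupp_deleteVerts_singleton_add_one [Finite V] (K : G.Subgraph) {v a b : V}
    (ha : a ≠ v) (hb : b ≠ v) : esupp K a b ≤ esupp (K.deleteVerts {v}) a b + 1 := by
  set K' := K.deleteVerts {v}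
  have hsub : {w | K.Adj a w ∧ K.Adj b w} ⊆ {w | K'.Adj a w ∧ K'.Adj b w} ∪ {v} := by
    rintro w ⟨haw, hbw⟩
    by_cases hw : w = v
    · exact Or.inr hw
    · exact Or.inl ⟨deleteVerts_singleton_adj.2 ⟨haw, ha, hw⟩,
        deleteVerts_singleton_adj.2 ⟨hbw, hb, hw⟩⟩
  calc esupp K a b ≤ ({w | K'.Adj a w ∧ K'.Adj b w} ∪ {v}).ncard :=
        Set.ncard_le_ncard hsub (Set.toFinite _)
    _ ≤ esupp K' a b + 1 :=
        (Set.ncard_union_le _ _).trans_eq (congrArg _ (Set.ncard_singleton v))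

end SimpleGraph.Subgraph

section Trussness

variable {V : Type*} {G H : SimpleGraph V}

lemma IsKTruss.deleteVerts_singleton [Finite V] {K : G.Subgraph} {k : ℕ} (hK : IsKTruss K k)
    (v : V) : IsKTruss (K.deleteVerts {v}) (k - 1) := by
  intro a b hab'
  obtain ⟨hab, ha, hb⟩ := Subgraph.deleteVerts_singleton_adj.1 hab'
  have := K.esupp_le_esupp_deleteVerts_singleton_add_one ha hb
  have := hK a b hab
  omega

lemma esupp_le_card [Fintype V] (K : G.Subgraph) (a b : V) : esupp K a b ≤ Fintype.card V := by
  simpa only [esupp, Set.ncard_univ, Nat.card_eq_fintype_card] using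
    Set.ncard_le_ncard (Set.subset_univ {w | K.Adj a w ∧ K.Adj b w})

lemma bddAbove_trussness_set [Fintype V] (x y : V) :
    BddAbove {k | ∃ K : G.Subgraph, K.Adj x y ∧ IsKTruss K k} := by
  refine ⟨Fintype.card V + 2, ?_⟩
  rintro k ⟨K, hxy, hK⟩
  have := hK x y hxy
  have := esupp_le_card K x y
  omega

lemma le_tr [Fintype V] {K : G.Subgraph} {x y : V} {k : ℕ} (hxy : K.Adj x y)
    (hK : IsKTruss K k) : k ≤ tr G x y :=
  le_csSup (bddAbove_trussness_set x y) ⟨K, hxy, hK⟩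

lemma tr_le {x y : V} {m : ℕ} (h : ∀ (K : G.Subgraph) k, K.Adj x y → IsKTruss K k → k ≤ m) :
    tr G x y ≤ m :=
  csSup_le' fun _ ⟨K, hxy, hK⟩ => h K _ hxy hK

lemma tr_mono [Fintype V] (hGH : G ≤ H) (x y : V) : tr G x y ≤ tr H x y :=
  tr_le fun K _ hxy hK => le_tr (K := K.transfer fun _ _ h => hGH (K.adj_sub h)) hxy hK

lemma tr_le_tr_add_one_of_adj_imp [Fintype V] {v x y : V}
    (hHG : ∀ a b, H.Adj a b → a ≠ v → b ≠ v → G.Adj a b) (hx : x ≠ v) (hy : y ≠ v) :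
    tr H x y ≤ tr G x y + 1 :=
  tr_le fun K k hxy hK => by
    have := le_tr (K := (K.deleteVerts {v}).transfer (G := G) fun a b hab' =>
        have ⟨hab, ha, hb⟩ := Subgraph.deleteVerts_singleton_adj.1 hab'
        hHG a b (K.adj_sub hab) ha hb)
      (Subgraph.deleteVerts_singleton_adj.2 ⟨hxy, hx, hy⟩) (hK.deleteVerts_singleton v)
    omega

end Trussness

theorem stmt4_general {V : Type*} [Fintype V] (G G' : SimpleGraph V) (v : V) (N : Set V)
    (hIso : ∀ w, ¬ G.Adj v w)
    (hG' : ∀ x y, G'.Adj x y ↔ G.Adj x y ∨ (x = v ∧ y ∈ N) ∨ (y = v ∧ x ∈ N)) :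
    ∀ x y, G.Adj x y → tr G' x y ≤ tr G x y + 1 ∧ tr G x y ≤ tr G' x y + 1 := by
  intro x y hxy
  have hx : x ≠ v := by rintro rfl; exact hIso y hxy
  have hy : y ≠ v := by rintro rfl; exact hIso x hxy.symm
  have hGG' : G ≤ G' := fun a b h => (hG' a b).2 (Or.inl h)
  have hG'G : ∀ a b, G'.Adj a b → a ≠ v → b ≠ v → G.Adj a b := by
    intro a b hab ha hb
    rcases (hG' a b).1 hab with h | ⟨rfl, _⟩ | ⟨rfl, _⟩
    exacts [h, absurd rfl ha, absurd rfl hb]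
  exact ⟨tr_le_tr_add_one_of_adj_imp hG'G hx hy, (tr_mono hGG' x y).trans (Nat.le_succ _)⟩

/-- inserting a fresh vertex v with incident edges to N changes the
trussness of every old edge by at most 1. -/
theorem stmt4 {V : Type*} [Fintype V] (G G' : SimpleGraph V) (v : V) (N : Set V)
    (hvN : v ∉ N) (hIso : ∀ w, ¬ G.Adj v w)
    (hG' : ∀ x y, G'.Adj x y ↔ G.Adj x y ∨ (x = v ∧ y ∈ N) ∨ (y = v ∧ x ∈ N)) :
    ∀ x y, G.Adj x y → tr G' x y ≤ tr G x y + 1 ∧ tr G x y ≤ tr G' x y + 1 :=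
  stmt4_general G G' v N hIso hG'
end

section
/- When a vertex v and all its incident edges are deleted from a graph G, every remaining edge e satisfies τ_new(e) ≥ τ_old(e) − 1, where τ_old is trussness in G and τ_new is trussness in G − v. -/
/-! Restricting a `k`-truss of `G` to the vertices other than `v` gives a `(k - 1)`-truss of
`G - v`: an edge of the restriction loses at most the one triangle whose apex is `v`. -/

section

variable {V : Type*} {G G' : SimpleGraph V}

theorem esupp_le_card_s5 [Finite V] (K : G.Subgraph) (u w : V) : esupp K u w ≤ Nat.card V := by
  rw [← Set.ncard_univ]
  exact Set.ncard_le_ncard (Set.subset_univ _)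

theorem bddAbove_trussOrders [Finite V] (u w : V) :
    BddAbove {k | ∃ K : G.Subgraph, K.Adj u w ∧ IsKTruss K k} := by
  refine ⟨Nat.card V + 2, ?_⟩
  rintro k ⟨K, huw, hK⟩
  have := hK u w huw
  have := esupp_le_card_s5 K u w
  omega

theorem le_tr_of_isKTruss [Finite V] {K : G.Subgraph} {u w : V} {k : ℕ} (huw : K.Adj u w)
    (hK : IsKTruss K k) : k ≤ tr G u w :=
  le_csSup (bddAbove_trussOrders u w) ⟨K, huw, hK⟩

theorem esupp_le_esupp_add_one [Finite V] {K : G.Subgraph} {K' : G'.Subgraph} {v u w : V}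
    (hKK' : ∀ a b, K.Adj a b → a ≠ v → b ≠ v → K'.Adj a b) (hu : u ≠ v) (hw : w ≠ v) :
    esupp K u w ≤ esupp K' u w + 1 := by
  have hsub : {z | K.Adj u z ∧ K.Adj w z} ⊆ insert v {z | K'.Adj u z ∧ K'.Adj w z} := by
    rintro z ⟨huz, hwz⟩
    by_cases hz : z = v
    · exact Or.inl hz
    · exact Or.inr ⟨hKK' u z huz hu hz, hKK' w z hwz hw hz⟩
  exact (Set.ncard_le_ncard hsub).trans (Set.ncard_insert_le _ _)

theorem IsKTruss.of_deleteVertex [Finite V] {K : G.Subgraph} {K' : G'.Subgraph} {v : V} {k : ℕ}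
    (hK : IsKTruss K k) (hKK' : ∀ a b, K'.Adj a b ↔ K.Adj a b ∧ a ≠ v ∧ b ≠ v) :
    IsKTruss K' (k - 1) := by
  intro u w huw
  obtain ⟨hKuw, hu, hw⟩ := (hKK' u w).1 huw
  have := hK u w hKuw
  have := esupp_le_esupp_add_one (fun a b hab ha hb => (hKK' a b).2 ⟨hab, ha, hb⟩) hu hw
  omega

end

/-- deleting a vertex v and all its incident edges decreases the
trussness of every remaining edge by at most 1. -/
theorem stmt5 {V : Type*} [Fintype V] (G G' : SimpleGraph V) (v : V)
    (hG' : ∀ x y, G'.Adj x y ↔ G.Adj x y ∧ x ≠ v ∧ y ≠ v) :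
    ∀ x y, G'.Adj x y → tr G x y ≤ tr G' x y + 1 := by
  intro x y hxy
  obtain ⟨-, hx, hy⟩ := (hG' x y).1 hxy
  refine csSup_le' ?_
  rintro k ⟨K, hKxy, hK⟩
  have hle : K.spanningCoe.deleteIncidenceSet v ≤ G' := fun a b hab => by
    obtain ⟨hab, ha, hb⟩ := SimpleGraph.deleteIncidenceSet_adj.1 hab
    exact (hG' a b).2 ⟨K.adj_sub hab, ha, hb⟩
  let K' : G'.Subgraph := SimpleGraph.toSubgraph _ hle
  have hKK' : ∀ a b, K'.Adj a b ↔ K.Adj a b ∧ a ≠ v ∧ b ≠ v := fun _ _ =>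
    SimpleGraph.deleteIncidenceSet_adj
  have := le_tr_of_isKTruss ((hKK' x y).2 ⟨hKxy, hx, hy⟩) (hK.of_deleteVertex hKK')
  omega
end

section
/- Suppose a new vertex v with incident edge set E(v) is inserted into G, and let l = max over e in E(v) of the new trussness τ_new(e). Then for every old edge e of G with τ_old(e) ≥ l, the trussness is unchanged: τ_new(e) = τ_old(e). (Rule 1 for node insertion.) -/
open SimpleGraph

/-!
Let `K` be a subgraph of `G'` realising the trussness `τ_new(xy)` of an old edge `xy`.
If `K` contains an edge `vw` then `w ∈ N` and `τ_new(xy) ≤ τ_new(vw) ≤ l ≤ τ_old(xy)`.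
Otherwise all edges of `K` are edges of `G`, so `K` is already a truss of `G` and
`τ_new(xy) ≤ τ_old(xy)`. The reverse inequality is monotonicity of trussness in the graph.
-/

section Trussness

variable {V : Type*}

def trussSet (G : SimpleGraph V) (u v : V) : Set ℕ :=
  {k | ∃ K : G.Subgraph, K.Adj u v ∧ IsKTruss K k}

def SimpleGraph.Subgraph.ofAdjLE {G H : SimpleGraph V} (K : G.Subgraph)
    (hK : ∀ {a b}, K.Adj a b → H.Adj a b) : H.Subgraph where
  verts := K.verts
  Adj := K.Adj
  adj_sub := hK
  edge_vert := K.edge_vert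
  symm := K.symm

-- Being a `k`-truss depends only on `Adj`, so `K.ofAdjLE hK` inherits `hk` definitionally.
theorem mem_trussSet_of_forall_adj {G H : SimpleGraph V} {K : G.Subgraph} {u v : V} {k : ℕ}
    (hK : ∀ {a b}, K.Adj a b → H.Adj a b) (huv : K.Adj u v) (hk : IsKTruss K k) :
    k ∈ trussSet H u v :=
  ⟨K.ofAdjLE hK, huv, hk⟩

theorem zero_mem_trussSet {G : SimpleGraph V} {u v : V} (h : G.Adj u v) : 0 ∈ trussSet G u v :=
  ⟨G.subgraphOfAdj h, by simp, fun _ _ _ => Nat.zero_le _⟩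

theorem bddAbove_trussSet [Finite V] (G : SimpleGraph V) (u v : V) :
    BddAbove (trussSet G u v) := by
  refine ⟨Nat.card V + 2, ?_⟩
  rintro k ⟨K, hK, hk⟩
  have := (hk u v hK).trans (Set.ncard_le_card _)
  omega

theorem le_tr_s6 [Finite V] {G : SimpleGraph V} {K : G.Subgraph} {u v : V} {k : ℕ}
    (huv : K.Adj u v) (hk : IsKTruss K k) : k ≤ tr G u v :=
  le_csSup (bddAbove_trussSet G u v) ⟨K, huv, hk⟩

theorem exists_isKTruss_tr [Finite V] {G : SimpleGraph V} {u v : V} (h : G.Adj u v) :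
    ∃ K : G.Subgraph, K.Adj u v ∧ IsKTruss K (tr G u v) :=
  Nat.sSup_mem ⟨0, zero_mem_trussSet h⟩ (bddAbove_trussSet G u v)

theorem tr_mono_s6 [Finite V] {G H : SimpleGraph V} (hGH : G ≤ H) (u v : V) :
    tr G u v ≤ tr H u v :=
  csSup_le_csSup' (bddAbove_trussSet H u v) fun _ ⟨K, huv, hk⟩ =>
    mem_trussSet_of_forall_adj (fun h => hGH (K.adj_sub h)) huv hk

section VertexInsertion

variable {G G' : SimpleGraph V} {v : V} {N : Set V}

theorem mem_of_adj_inserted (hIso : ∀ w, ¬ G.Adj v w)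
    (hG' : ∀ x y, G'.Adj x y ↔ G.Adj x y ∨ (x = v ∧ y ∈ N) ∨ (y = v ∧ x ∈ N))
    {w : V} (h : G'.Adj v w) : w ∈ N := by
  rcases (hG' v w).mp h with h' | ⟨-, hw⟩ | ⟨rfl, -⟩
  · exact absurd h' (hIso w)
  · exact hw
  · exact absurd rfl h.ne

theorem SimpleGraph.Subgraph.adj_of_forall_not_adj_inserted
    (hG' : ∀ x y, G'.Adj x y ↔ G.Adj x y ∨ (x = v ∧ y ∈ N) ∨ (y = v ∧ x ∈ N))
    {K : G'.Subgraph} (hv : ∀ w, ¬ K.Adj v w) {a b : V} (h : K.Adj a b) : G.Adj a b := by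
  rcases (hG' a b).mp (K.adj_sub h) with h' | ⟨rfl, -⟩ | ⟨rfl, -⟩
  · exact h'
  · exact absurd h (hv b)
  · exact absurd h.symm (hv a)

theorem tr_inserted_le [Finite V] (hIso : ∀ w, ¬ G.Adj v w)
    (hG' : ∀ x y, G'.Adj x y ↔ G.Adj x y ∨ (x = v ∧ y ∈ N) ∨ (y = v ∧ x ∈ N))
    {x y : V} (hxy : G'.Adj x y) : tr G' x y ≤ max (sSup (tr G' v '' N)) (tr G x y) := by
  obtain ⟨K, hKxy, hK⟩ := exists_isKTruss_tr hxy
  by_cases hv : ∃ w, K.Adj v w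
  · obtain ⟨w, hvw⟩ := hv
    have hwN := mem_of_adj_inserted hIso hG' (K.adj_sub hvw)
    calc tr G' x y ≤ tr G' v w := le_tr_s6 hvw hK
      _ ≤ sSup (tr G' v '' N) := le_csSup (Set.toFinite _).bddAbove ⟨w, hwN, rfl⟩
      _ ≤ _ := le_max_left _ _
  · have hKG : ∀ {a b}, K.Adj a b → G.Adj a b :=
      K.adj_of_forall_not_adj_inserted hG' (not_exists.mp hv)
    calc tr G' x y ≤ tr G x y :=
          le_csSup (bddAbove_trussSet G x y) (mem_trussSet_of_forall_adj hKG hKxy hK)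
      _ ≤ _ := le_max_right _ _

end VertexInsertion

end Trussness

theorem stmt6_general {V : Type*} [Fintype V] (G G' : SimpleGraph V) (v : V) (N : Set V)
    (hIso : ∀ w, ¬ G.Adj v w)
    (hG' : ∀ x y, G'.Adj x y ↔ G.Adj x y ∨ (x = v ∧ y ∈ N) ∨ (y = v ∧ x ∈ N)) :
    ∀ x y, G.Adj x y → sSup ((tr G' v) '' N) ≤ tr G x y → tr G' x y = tr G x y := by
  intro x y hxy hl
  have hGG' : G ≤ G' := fun a b h => (hG' a b).mpr (Or.inl h)
  refine le_antisymm ?_ (tr_mono_s6 hGG' x y)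
  simpa [hl] using tr_inserted_le hIso hG' (hGG' hxy)

/-- Rule 1 for node insertion: insert a fresh vertex v with edges to N;
let l be the maximum of the new trussness values of the inserted edges. Then every old
edge of trussness ≥ l keeps its trussness. -/
theorem stmt6 {V : Type*} [Fintype V] (G G' : SimpleGraph V) (v : V) (N : Set V)
    (hvN : v ∉ N) (hIso : ∀ w, ¬ G.Adj v w)
    (hG' : ∀ x y, G'.Adj x y ↔ G.Adj x y ∨ (x = v ∧ y ∈ N) ∨ (y = v ∧ x ∈ N)) :
    ∀ x y, G.Adj x y → sSup ((tr G' v) '' N) ≤ tr G x y → tr G' x y = tr G x y :=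
  stmt6_general G G' v N hIso hG'
end

section
/- With lower bound k_low(e) = max{k : w ∈ G_v^{k, k−2}} and upper bound k_up(e) = max{k : w ∈ G_v^{k−1, k−2}} for a newly inserted edge e = (v,w), we have k_low(e) ≤ k_up(e) ≤ k_low(e) + 1. -/
/-! Both bounds are read off the same monotone family of neighbourhoods: lowering the trussness
threshold or the degree threshold can only enlarge `G_v^{k,d}`. Hence every `k` witnessing
`k_low` also witnesses `k_up` (lower `k`), and every `k` witnessing `k_up` makes `k - 1` a witness
for `k_low` (lower `d` from `k - 2` to `k - 3`). Both suprema are finite because a vertex of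
`G_v^{k,d}` has degree at least `d`. -/

open SimpleGraph

/-- The family of subgraphs H ⊆ G[N] with every edge of trussness ≥ k in G and every
vertex of degree ≥ d in H. -/
def fam {V : Type*} (G : SimpleGraph V) (N : Set V) (k d : ℕ) : Set G.Subgraph :=
  {H | H.verts ⊆ N ∧ (∀ x y, H.Adj x y → k ≤ tr G x y) ∧
    ∀ u ∈ H.verts, d ≤ (H.neighborSet u).ncard}

/-- The (k,d)-neighborhood G_v^{k,d}: the maximal subgraph of G[N(v)] in the family. -/
noncomputable def nbhd {V : Type*} (G : SimpleGraph V) (N : Set V) (k d : ℕ) : G.Subgraph :=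
  sSup (fam G N k d)

section Neighborhood

variable {V : Type*} (G : SimpleGraph V) (N : Set V)

lemma mem_nbhd_verts_iff {k d : ℕ} {w : V} :
    w ∈ (nbhd G N k d).verts ↔ ∃ H ∈ fam G N k d, w ∈ H.verts := by
  simp [nbhd, Subgraph.verts_sSup]

lemma fam_anti {k k' d d' : ℕ} (hk : k' ≤ k) (hd : d' ≤ d) : fam G N k d ⊆ fam G N k' d' :=
  fun _ ⟨hN, htr, hdeg⟩ =>
    ⟨hN, fun x y hxy => hk.trans (htr x y hxy), fun u hu => hd.trans (hdeg u hu)⟩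

lemma nbhd_anti {k k' d d' : ℕ} (hk : k' ≤ k) (hd : d' ≤ d) : nbhd G N k d ≤ nbhd G N k' d' :=
  sSup_le_sSup (fam_anti G N hk hd)

lemma mem_nbhd_verts_of_mem (k : ℕ) {w : V} (hw : w ∈ N) : w ∈ (nbhd G N k 0).verts := by
  refine (mem_nbhd_verts_iff G N).2
    ⟨G.singletonSubgraph w, ⟨?_, ?_, fun _ _ => Nat.zero_le _⟩, rfl⟩
  · simpa using hw
  · simp

lemma le_card_of_mem_nbhd_verts [Finite V] {k d : ℕ} {w : V} (hw : w ∈ (nbhd G N k d).verts) :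
    d ≤ Nat.card V := by
  obtain ⟨H, ⟨-, -, hdeg⟩, hwH⟩ := (mem_nbhd_verts_iff G N).1 hw
  exact (hdeg w hwH).trans (Set.ncard_le_card _)

end Neighborhood

theorem stmt10_general {V : Type*} [Fintype V] (G : SimpleGraph V) (N : Set V)
    (w : V) (hw : w ∈ N) :
    sSup {k | w ∈ (nbhd G N k (k - 2)).verts} ≤
      sSup {k | w ∈ (nbhd G N (k - 1) (k - 2)).verts} ∧
    sSup {k | w ∈ (nbhd G N (k - 1) (k - 2)).verts} ≤
      sSup {k | w ∈ (nbhd G N k (k - 2)).verts} + 1 := by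
  set A := {k | w ∈ (nbhd G N k (k - 2)).verts}
  set B := {k | w ∈ (nbhd G N (k - 1) (k - 2)).verts}
  have hAB : A ⊆ B := fun k hk => (nbhd_anti G N (Nat.sub_le k 1) le_rfl).1 hk
  have hBA : ∀ k ∈ B, k - 1 ∈ A := fun k hk =>
    (nbhd_anti G N le_rfl (Nat.sub_le_sub_right (Nat.sub_le k 1) 2)).1 hk
  have h0A : 0 ∈ A := mem_nbhd_verts_of_mem G N 0 hw
  have hBbdd : BddAbove B :=
    ⟨Nat.card V + 2, fun k hk => by have := le_card_of_mem_nbhd_verts G N hk; omega⟩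
  refine ⟨csSup_le_csSup hBbdd ⟨0, h0A⟩ hAB, csSup_le ⟨0, hAB h0A⟩ fun k hk => ?_⟩
  have := le_csSup (hBbdd.mono hAB) (hBA k hk)
  omega

/-- for a newly inserted edge e = (v,w), the lower bound
k_low(e) = max{k : w ∈ G_v^{k,k-2}} and the upper bound
k_up(e) = max{k : w ∈ G_v^{k-1,k-2}} satisfy k_low(e) ≤ k_up(e) ≤ k_low(e) + 1. -/
theorem stmt10 {V : Type*} [Fintype V] (G : SimpleGraph V) (v : V) (N : Set V)
    (hvN : v ∉ N) (hIso : ∀ w, ¬ G.Adj v w) (w : V) (hw : w ∈ N) :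
    sSup {k | w ∈ (nbhd G N k (k - 2)).verts} ≤
      sSup {k | w ∈ (nbhd G N (k - 1) (k - 2)).verts} ∧
    sSup {k | w ∈ (nbhd G N (k - 1) (k - 2)).verts} ≤
      sSup {k | w ∈ (nbhd G N k (k - 2)).verts} + 1 :=
  stmt10_general G N w hw
end
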